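/- With G, C1, C2, α_1, α_2 as in the context (in particular G has no universal vertex), let {i,j} = {1,2} and let k be a positive integer. If α_i = 1, then every k-tuple dominating set D of G satisfies |D ∩ C_j| ≥ k. -/
import Mathlib


open Set

/-- The closed neighborhood `N[v]` of a vertex `v`: `v` together with its neighbors. -/
def closedNbhd {V : Type*} (G : SimpleGraph V) (v : V) : Set V :=
  insert v {w | G.Adj v w}

/-- `D` is a `k`-tuple dominating set of `G`: every vertex has at least `k` members of `D`
in its closed neighborhood. -/
def IsKTupleDomSet {V : Type*} (G : SimpleGraph V) (k : ℕ) (D : Set V) : Prop :=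
  ∀ v : V, k ≤ (closedNbhd G v ∩ D).ncard

/-- `γ×k(G)`: the minimum cardinality of a `k`-tuple dominating set of `G`. -/
noncomputable def gammaTuple {V : Type*} (G : SimpleGraph V) (k : ℕ) : ℕ :=
  sInf {n | ∃ D : Set V, IsKTupleDomSet G k D ∧ D.ncard = n}

/-- A vertex is universal if its closed neighborhood is the whole vertex set. -/
def IsUniversalVertex {V : Type*} (G : SimpleGraph V) (u : V) : Prop :=
  closedNbhd G u = Set.univ

/-- The non-neighbor set `N̄(v) = V \ N[v]`. -/
def nonNbhd {V : Type*} (G : SimpleGraph V) (v : V) : Set V :=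
  (closedNbhd G v)ᶜ

/-- `S` is a stable set of the auxiliary interval graph `H_i`: the non-neighbor sets of the
vertices of `S` are pairwise disjoint. -/
def IsC0PStable {V : Type*} (G : SimpleGraph V) (S : Set V) : Prop :=
  S.Pairwise fun u w => Disjoint (nonNbhd G u) (nonNbhd G w)


lemma nonNbhd_nonempty' {V : Type*} [Fintype V] (G : SimpleGraph V)
    (hnouniv : ∀ v : V, ¬ IsUniversalVertex G v) (v : V) : (nonNbhd G v).Nonempty := by
  rw [nonNbhd, Set.nonempty_compl]
  exact hnouniv v

lemma mem_closedNbhd_comm' {V : Type*} (G : SimpleGraph V) {u v : V} :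
    u ∈ closedNbhd G v ↔ v ∈ closedNbhd G u := by
  simp only [closedNbhd, Set.mem_insert_iff, Set.mem_setOf_eq]
  constructor
  · rintro (rfl | h)
    · exact Or.inl rfl
    · exact Or.inr h.symm
  · rintro (rfl | h)
    · exact Or.inl rfl
    · exact Or.inr h.symm

lemma key16 {V : Type*} [Fintype V] [LinearOrder V] (G : SimpleGraph V) (Ci Cj : Set V)
    (hunion : Ci ∪ Cj = Set.univ)
    (hclI : G.IsClique Ci)
    (hnouniv : ∀ v : V, ¬ IsUniversalVertex G v)
    (hint : ∀ v ∈ Ci, ∀ a ∈ Cj, ∀ b ∈ Cj, ∀ c ∈ Cj, a ≤ b → b ≤ c →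
        a ∈ nonNbhd G v → c ∈ nonNbhd G v → b ∈ nonNbhd G v)
    (hα : IsGreatest {n | ∃ S : Set V, S ⊆ Ci ∧ IsC0PStable G S ∧ S.ncard = n} 1)
    (hneI : Ci.Nonempty)
    (k : ℕ) (D : Set V) (hD : IsKTupleDomSet G k D) : k ≤ (D ∩ Cj).ncard := by
  -- non-neighborhoods of Ci vertices lie in Cj
  have hsub : ∀ v ∈ Ci, nonNbhd G v ⊆ Cj := by
    intro v hv w hw
    have hwnotCi : w ∉ Ci := by
      intro hwCi
      rcases eq_or_ne w v with rfl | hne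
      · exact hw (Set.mem_insert _ _)
      · exact hw (Set.mem_insert_iff.mpr (Or.inr (hclI hv hwCi hne.symm)))
    have hwu : w ∈ Ci ∪ Cj := hunion ▸ Set.mem_univ w
    exact hwu.resolve_left hwnotCi
  -- pairwise intersecting
  have hpair : ∀ u ∈ Ci, ∀ v ∈ Ci, (nonNbhd G u ∩ nonNbhd G v).Nonempty := by
    intro u hu v hv
    rcases eq_or_ne u v with rfl | hne
    · simpa using nonNbhd_nonempty' G hnouniv u
    by_contra h
    have hdisj : Disjoint (nonNbhd G u) (nonNbhd G v) :=
      Set.disjoint_iff_inter_eq_empty.mpr (Set.not_nonempty_iff_eq_empty.mp h)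
    have h2 : (2 : ℕ) ∈ {n | ∃ S : Set V, S ⊆ Ci ∧ IsC0PStable G S ∧ S.ncard = n} := by
      refine ⟨{u, v}, ?_, ?_, Set.ncard_pair hne⟩
      · intro x hx
        rcases hx with rfl | rfl
        · exact hu
        · exact hv
      · intro a ha b hb hab
        rcases ha with rfl | rfl <;> rcases hb with rfl | rfl
        · exact absurd rfl hab
        · exact hdisj
        · exact hdisj.symm
        · exact absurd rfl hab
    have := hα.2 h2
    omega
  -- Helly: common point
  have hfin : ∀ v : V, (nonNbhd G v).Finite := fun v => Set.toFinite _
  have hfne : ∀ v : V, ((hfin v).toFinset).Nonempty := fun v => by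
    rw [Set.Finite.toFinset_nonempty]; exact nonNbhd_nonempty' G hnouniv v
  set f : V → V := fun v => ((hfin v).toFinset).min' (hfne v) with hf
  have hmem : ∀ v : V, f v ∈ nonNbhd G v := fun v => by
    have := ((hfin v).toFinset).min'_mem (hfne v)
    simpa using this
  obtain ⟨v0, hv0, hmax⟩ := Set.exists_max_image Ci f (Set.toFinite Ci) hneI
  set x := f v0 with hx
  have hxall : ∀ v ∈ Ci, x ∈ nonNbhd G v := by
    intro v hv
    rcases eq_or_ne v v0 with rfl | hne
    · exact hmem v
    obtain ⟨t, ht0, htv⟩ := hpair v0 hv0 v hv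
    have h1 : f v ≤ x := hmax v hv
    have h2 : x ≤ t := Finset.min'_le ((hfin v0).toFinset) t (by simpa using ht0)
    exact hint v hv (f v) (hsub v hv (hmem v)) x (hsub v0 hv0 (hmem v0)) t
      (hsub v hv htv) h1 h2 (hmem v) htv
  have hNsub : closedNbhd G x ∩ D ⊆ D ∩ Cj := by
    rintro w ⟨hw1, hw2⟩
    refine ⟨hw2, ?_⟩
    have hwnotCi : w ∉ Ci := by
      intro hwCi
      exact (hxall w hwCi) ((mem_closedNbhd_comm' G).mp hw1)
    exact (hunion ▸ Set.mem_univ w : w ∈ Ci ∪ Cj).resolve_left hwnotCi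
  calc k ≤ (closedNbhd G x ∩ D).ncard := hD x
    _ ≤ (D ∩ Cj).ncard := Set.ncard_le_ncard hNsub (Set.toFinite _)

/-- in a C0P-graph with no universal vertices, for `{i,j} = {1,2}` and `k ≥ 1`, if `α_i = 1` then every `k`-tuple dominating set `D` of `G` satisfies `|D ∩ C_j| ≥ k`. -/
theorem stmt16 {V : Type*} [Fintype V] [LinearOrder V] (G : SimpleGraph V) (C1 C2 : Set V)
    (hd12 : Disjoint C1 C2) (hunion : C1 ∪ C2 = Set.univ)
    (hne1 : C1.Nonempty) (hne2 : C2.Nonempty)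
    (hcl1 : G.IsClique C1) (hcl2 : G.IsClique C2)
    (hnouniv : ∀ v : V, ¬ IsUniversalVertex G v)
    (hint1 : ∀ v ∈ C1, (nonNbhd G v).Nonempty ∧
      ∀ a ∈ C2, ∀ b ∈ C2, ∀ c ∈ C2, a ≤ b → b ≤ c →
        a ∈ nonNbhd G v → c ∈ nonNbhd G v → b ∈ nonNbhd G v)
    (hint2 : ∀ v ∈ C2, (nonNbhd G v).Nonempty ∧
      ∀ a ∈ C1, ∀ b ∈ C1, ∀ c ∈ C1, a ≤ b → b ≤ c →
        a ∈ nonNbhd G v → c ∈ nonNbhd G v → b ∈ nonNbhd G v)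
    (α1 α2 : ℕ)
    (hα1 : IsGreatest {n | ∃ S : Set V, S ⊆ C1 ∧ IsC0PStable G S ∧ S.ncard = n} α1)
    (hα2 : IsGreatest {n | ∃ S : Set V, S ⊆ C2 ∧ IsC0PStable G S ∧ S.ncard = n} α2)
    (k : ℕ) (hk : 0 < k) :
    (α1 = 1 → ∀ D : Set V, IsKTupleDomSet G k D → k ≤ (D ∩ C2).ncard) ∧
    (α2 = 1 → ∀ D : Set V, IsKTupleDomSet G k D → k ≤ (D ∩ C1).ncard) := by
  constructor
  · intro h1 D hD
    exact key16 G C1 C2 hunion hcl1 hnouniv (fun v hv => (hint1 v hv).2)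
      (h1 ▸ hα1) hne1 k D hD
  · intro h2 D hD
    exact key16 G C2 C1 (by rw [Set.union_comm]; exact hunion) hcl2 hnouniv
      (fun v hv => (hint2 v hv).2) (h2 ▸ hα2) hne2 k D hD
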